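/- The Euclidean plane ℝ² is not NDH: there exists a closed nowhere dense subset X₀ = ({0} ∪ {1} ∪ {2}) × ℝ of ℝ² and a self-homeomorphism f of X₀ (fixing {0} × ℝ pointwise and swapping {1} × ℝ and {2} × ℝ via (1,x) ↦ (2,x), (2,x) ↦ (1,x)) that cannot be extended to a homeomorphism of ℝ² onto itself. -/

import Mathlib

/-!
Let `F` be a homeomorphism of the plane extending `f`. Being injective, `F` maps the
complement of the line `x = 1` into the complement of its image, the line `x = 2`. Each of
the two open half-planes `x < 1` and `x > 1` is connected and contains a point sent to the left
of `x = 2` (namely `(0, 0) ↦ (0, 0)` and `(2, 0) ↦ (1, 0)`), so by the intermediate value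
theorem all of the plane is sent into `x ≤ 2`, contradicting surjectivity.
-/

open Set

theorem IsPreconnected.forall_lt_of_forall_ne {X α : Type*} [TopologicalSpace X] [LinearOrder α]
    [TopologicalSpace α] [OrderClosedTopology α] {s : Set X} (hs : IsPreconnected s) {f : X → α}
    (hf : ContinuousOn f s) {c : α} (hne : ∀ x ∈ s, f x ≠ c) {a : X} (ha : a ∈ s) (hac : f a < c)
    {x : X} (hx : x ∈ s) : f x < c := by
  by_contra! hcx
  obtain ⟨y, hy, hyc⟩ := hs.intermediate_value ha hx hf ⟨hac.le, hcx⟩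
  exact hne y hy hyc

theorem IsNowhereDense.prod_univ {X Y : Type*} [TopologicalSpace X] [TopologicalSpace Y]
    {s : Set X} (hs : IsNowhereDense s) : IsNowhereDense (s ×ˢ (univ : Set Y)) := by
  rw [IsNowhereDense, closure_prod_eq, closure_univ, interior_prod_eq, hs, empty_prod]

theorem Equiv.swap_apply_mem_iff {α : Type*} [DecidableEq α] {s : Set α} {a b : α} (ha : a ∈ s)
    (hb : b ∈ s) (x : α) : swap a b x ∈ s ↔ x ∈ s := by
  rcases eq_or_ne x a with rfl | hxa
  · simp [ha, hb]
  rcases eq_or_ne x b with rfl | hxb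
  · simp [ha, hb]
  rw [swap_apply_of_ne_of_ne hxa hxb]

def Homeomorph.setProdCongrLeft {X Y : Type*} [TopologicalSpace X] [TopologicalSpace Y]
    {s : Set X} (σ : s ≃ₜ s) (t : Set Y) : ↥(s ×ˢ t) ≃ₜ ↥(s ×ˢ t) :=
  (Homeomorph.Set.prod s t).trans <|
    (σ.prodCongr (Homeomorph.refl t)).trans (Homeomorph.Set.prod s t).symm

theorem Function.Injective.fst_ne_of_apply_mk_eq {X Y : Type*} {F : X × Y → X × Y}
    (hF : F.Injective) {a b : X} (hline : ∀ y, F (a, y) = (b, y)) {p : X × Y} (hp : p.1 ≠ a) :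
    (F p).1 ≠ b := by
  intro h
  have : F p = F (a, (F p).2) := by rw [hline, ← h]
  exact hp (congrArg Prod.fst (hF this))

theorem Homeomorph.fst_apply_le_of_apply_mk_eq {Y : Type*} [TopologicalSpace Y]
    [PreconnectedSpace Y] (F : ℝ × Y ≃ₜ ℝ × Y) {a b : ℝ} (hline : ∀ y, F (a, y) = (b, y))
    {p q : ℝ × Y} (hp : p.1 < a) (hq : a < q.1) (hFp : (F p).1 < b) (hFq : (F q).1 < b)
    (x : ℝ × Y) : (F x).1 ≤ b := by
  have hcont : ContinuousOn (fun z => (F z).1) univ :=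
    (continuous_fst.comp F.continuous).continuousOn
  have hoff : ∀ z : ℝ × Y, z.1 ≠ a → (F z).1 ≠ b := fun _ => F.injective.fst_ne_of_apply_mk_eq hline
  rcases lt_trichotomy x.1 a with hx | hx | hx
  · exact ((isPreconnected_Iio.prod isPreconnected_univ).forall_lt_of_forall_ne
      (hcont.mono (subset_univ _)) (fun z hz => hoff z hz.1.ne) ⟨hp, trivial⟩ hFp
      ⟨hx, trivial⟩).le
  · rw [← Prod.mk.eta (p := x), hx, hline]
  · exact ((isPreconnected_Ioi.prod isPreconnected_univ).forall_lt_of_forall_ne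
      (hcont.mono (subset_univ _)) (fun z hz => hoff z hz.1.ne') ⟨hq, trivial⟩ hFq
      ⟨hx, trivial⟩).le

theorem plane_not_NDH :
    ∃ X₀ : Set (ℝ × ℝ), X₀ = ({0, 1, 2} : Set ℝ) ×ˢ (Set.univ : Set ℝ) ∧
      IsClosed X₀ ∧ IsNowhereDense X₀ ∧
      ∃ f : X₀ ≃ₜ X₀,
        (∀ p : X₀, (p : ℝ × ℝ).1 = 0 → ((f p : ℝ × ℝ) = (p : ℝ × ℝ))) ∧
        (∀ p : X₀, (p : ℝ × ℝ).1 = 1 → ((f p : ℝ × ℝ) = (2, (p : ℝ × ℝ).2))) ∧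
        (∀ p : X₀, (p : ℝ × ℝ).1 = 2 → ((f p : ℝ × ℝ) = (1, (p : ℝ × ℝ).2))) ∧
        ∀ F : (ℝ × ℝ) ≃ₜ (ℝ × ℝ), ¬ (∀ a : X₀, F a = (f a : ℝ × ℝ)) := by
  set S : Set ℝ := {0, 1, 2}
  have hS : S.Finite := toFinite S
  let σ : S ≃ₜ S := ((Equiv.swap (1 : ℝ) 2).subtypePerm
    (Equiv.swap_apply_mem_iff (s := S) (by simp [S]) (by simp [S]))).toHomeomorphOfDiscrete
  set f := σ.setProdCongrLeft (univ : Set ℝ)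
  have hf : ∀ p, (f p : ℝ × ℝ) = (Equiv.swap (1 : ℝ) 2 (p : ℝ × ℝ).1, (p : ℝ × ℝ).2) := fun _ => rfl
  refine ⟨_, rfl, hS.isClosed.prod isClosed_univ, ?_, f, ?_, ?_, ?_, ?_⟩
  · exact IsNowhereDense.prod_univ <| hS.isClosed.isNowhereDense_iff.2 <|
      interior_eq_empty_iff_dense_compl.2 (hS.countable.dense_compl ℝ)
  · intro p hp
    rw [hf, hp, Equiv.swap_apply_of_ne_of_ne (by norm_num) (by norm_num), ← hp]
  · intro p hp
    rw [hf, hp, Equiv.swap_apply_left]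
  · intro p hp
    rw [hf, hp, Equiv.swap_apply_right]
  · intro F hF
    have hext : ∀ x ∈ S, ∀ y, F (x, y) = (Equiv.swap (1 : ℝ) 2 x, y) :=
      fun x hx y => hF ⟨(x, y), hx, trivial⟩
    have hline : ∀ y, F (1, y) = (2, y) := fun y => by
      rw [hext 1 (by simp [S]), Equiv.swap_apply_left]
    have h0 : F (0, 0) = (0, 0) := by
      rw [hext 0 (by simp [S]), Equiv.swap_apply_of_ne_of_ne (by norm_num) (by norm_num)]
    have h2 : F (2, 0) = (1, 0) := by
      rw [hext 2 (by simp [S]), Equiv.swap_apply_right]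
    have := F.fst_apply_le_of_apply_mk_eq hline (p := (0, 0)) (q := (2, 0)) (by norm_num)
      (by norm_num) (by norm_num [h0]) (by norm_num [h2]) (F.symm (3, 0))
    norm_num at this
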